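/- For any countable family of integer-valued martingales, the set of infinite binary sequences X ∈ {0,1}^ω defeating all of them (i.e., no martingale in the family succeeds on X) is comeager in Cantor space. -/
import Mathlib


open Filter

/-- The initial segment of length `n` of an infinite binary sequence. -/
def seg (X : ℕ → Bool) (n : ℕ) : List Bool := List.ofFn (fun i : Fin n => X i)

/-- The martingale fairness condition. -/
def fairM (M : List Bool → ℝ) : Prop :=
  ∀ σ : List Bool, M σ = (M (σ ++ [false]) + M (σ ++ [true])) / 2

/-- `M` succeeds on `X`: `limsup_n M(X↾n) = ∞`. -/
def mSucceeds (M : List Bool → ℝ) (X : ℕ → Bool) : Prop :=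
  ∀ C : ℝ, ∃ n : ℕ, C < M (seg X n)

lemma seg_succ (X : ℕ → Bool) (n : ℕ) : seg X (n + 1) = seg X n ++ [X n] := by
  simp only [seg, List.ofFn_succ', Fin.last, List.concat_eq_append, Fin.coe_castSucc]

lemma seg_prefix (X : ℕ → Bool) {n m : ℕ} (h : n ≤ m) :
    ∃ l, seg X m = seg X n ++ l := by
  induction m, h using Nat.le_induction with
  | base => exact ⟨[], by simp⟩
  | succ m hm ih =>
    obtain ⟨l, hl⟩ := ih
    exact ⟨l ++ [X m], by rw [seg_succ, hl, List.append_assoc]⟩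

lemma length_seg (X : ℕ → Bool) (n : ℕ) : (seg X n).length = n := by
  simp [seg]

lemma getElem_seg (X : ℕ → Bool) (n j : ℕ) (h : j < (seg X n).length) :
    (seg X n)[j] = X j := by
  simp [seg]

/-- If no extension of `σ` has smaller value, the martingale is constant on the subtree. -/
lemma const_of_min (M : List Bool → ℝ) (hf : fairM M) (σ : List Bool)
    (h : ∀ l, M σ ≤ M (σ ++ l)) : ∀ l, M (σ ++ l) = M σ := by
  intro l
  induction l using List.reverseRecOn with
  | nil => simp
  | append_singleton l b ih =>
    have hfair := hf (σ ++ l)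
    have h0 := h (l ++ [false])
    have h1 := h (l ++ [true])
    rw [← List.append_assoc] at h0 h1
    rw [ih] at hfair
    cases b with
    | false => rw [← List.append_assoc]; linarith
    | true => rw [← List.append_assoc]; linarith

/-- From any node there is an extension whose whole subtree is constant. -/
lemma exists_good (M : List Bool → ℝ) (hf : fairM M)
    (hi : ∀ σ, ∃ k : ℕ, M σ = k) (σ : List Bool) :
    ∃ l₀, ∀ l, M ((σ ++ l₀) ++ l) = M (σ ++ l₀) := by
  obtain ⟨k, hk⟩ := hi σ
  induction k using Nat.strong_induction_on generalizing σ with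
  | _ k ih =>
    by_cases h : ∀ l, M σ ≤ M (σ ++ l)
    · exact ⟨[], by simpa using const_of_min M hf σ h⟩
    · push_neg at h
      obtain ⟨l, hl⟩ := h
      obtain ⟨k', hk'⟩ := hi (σ ++ l)
      have hkk : k' < k := by
        rw [hk, hk'] at hl
        exact_mod_cast hl
      obtain ⟨l₀, hl₀⟩ := ih k' hkk (σ ++ l) hk'
      refine ⟨l ++ l₀, fun l' => ?_⟩
      have := hl₀ l'
      rw [← List.append_assoc σ l l₀]
      exact this

/-- For any countable family of integer-valued martingales, the set of
sequences defeating all of them is comeager in Cantor space. -/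
theorem stmt3 (F : ℕ → (List Bool → ℝ))
    (hfair : ∀ i, fairM (F i)) (hnonneg : ∀ i σ, 0 ≤ F i σ)
    (hint : ∀ i σ, ∃ k : ℕ, F i σ = k) :
    {X : ℕ → Bool | ∀ i, ¬ mSucceeds (F i) X} ∈ residual (ℕ → Bool) := by
  have : {X : ℕ → Bool | ∀ i, ¬ mSucceeds (F i) X}
      = ⋂ i, {X : ℕ → Bool | ¬ mSucceeds (F i) X} := by
    ext X; simp
  rw [this]
  refine countable_iInter_mem.mpr fun i => ?_
  set M := F i with hM
  -- the dense open set of sequences passing through a "constant subtree" node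
  set U : Set (ℕ → Bool) := {X | ∃ n, ∀ l, M (seg X n ++ l) = M (seg X n)} with hU
  have hsub : U ⊆ {X : ℕ → Bool | ¬ mSucceeds (F i) X} := by
    intro X hX hs
    obtain ⟨n, hn⟩ := hX
    set C : ℝ := ∑ m ∈ Finset.range (n + 1), M (seg X m) with hC
    have hbd : ∀ m, M (seg X m) ≤ C := by
      intro m
      rcases le_or_gt m n with h | h
      · exact Finset.single_le_sum (fun j _ => hnonneg i _)
          (Finset.mem_range.mpr (Nat.lt_succ_of_le h))
      · obtain ⟨l, hl⟩ := seg_prefix X h.le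
        rw [hl, hn l]
        exact Finset.single_le_sum (fun j _ => hnonneg i _)
          (Finset.mem_range.mpr (Nat.lt_succ_self n))
    obtain ⟨m, hm⟩ := hs C
    exact absurd (hbd m) (not_le.mpr hm)
  refine mem_of_superset (residual_of_dense_open ?_ ?_) hsub
  · -- U is open
    rw [isOpen_iff_mem_nhds]
    rintro X ⟨n, hn⟩
    refine mem_of_superset ((Filter.biInter_finset_mem (Finset.range n)).mpr
      (fun j _ => IsOpen.mem_nhds
        ((isOpen_discrete {b : Bool | b = X j}).preimage (continuous_apply j)) rfl)) ?_
    intro Y hY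
    have hseg : seg Y n = seg X n := by
      apply congrArg List.ofFn
      funext j
      exact (Set.mem_iInter₂.mp hY j (Finset.mem_range.mpr j.isLt) : X j = Y j).symm
    exact ⟨n, by rw [hseg]; exact hn⟩
  · -- U is dense
    rw [dense_iff_inter_open]
    intro V hV ⟨X, hX⟩
    obtain ⟨I, u, h1, h2⟩ := isOpen_pi_iff.mp hV X hX
    set n := (I.sup id) + 1 with hn
    have hIn : ∀ j ∈ I, j < n := fun j hj =>
      Nat.lt_succ_of_le (Finset.le_sup (f := id) hj)
    obtain ⟨l₀, hl₀⟩ := exists_good M (hfair i) (hint i) (seg X n)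
    have hτlen : n ≤ (seg X n ++ l₀).length := by
      rw [List.length_append, length_seg]
      exact Nat.le_add_right _ _
    set Y : ℕ → Bool := fun j =>
      if h : j < (seg X n ++ l₀).length then (seg X n ++ l₀)[j] else false with hY
    have hYj : ∀ j, (h : j < (seg X n ++ l₀).length) → Y j = (seg X n ++ l₀)[j] := by
      intro j h; simp only [hY]; rw [dif_pos h]
    refine ⟨Y, h2 ?_, ?_⟩
    · -- Y ∈ V
      intro j hj
      have hjn : j < n := hIn j hj
      have hjτ : j < (seg X n ++ l₀).length := lt_of_lt_of_le hjn hτlen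
      have hjs : j < (seg X n).length := by rw [length_seg]; exact hjn
      have : Y j = X j := by
        rw [hYj j hjτ, List.getElem_append_left hjs, getElem_seg]
      rw [this]
      exact (h1 j hj).2
    · -- Y ∈ U
      refine ⟨(seg X n ++ l₀).length, ?_⟩
      have hsegY : seg Y (seg X n ++ l₀).length = seg X n ++ l₀ := by
        apply List.ext_getElem (by rw [length_seg])
        intro m h₁ h₂
        rw [getElem_seg]
        exact hYj m h₂
      rw [hsegY]
      exact hl₀
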